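/- arXiv:1410.6912 — 2 statements merged into one kernel-verified Lean document; each statement's English description precedes it below -/
import Mathlib

section
/- Let m be a positive integer. If there exist integers x, n with n ≥ 1 such that cos(2πx/n) = 1/√m, then m ∈ {1, 2, 4}. -/
open Real

/-! Squaring turns `cos θ = 1 / √m` into the rational value `cos 2θ = 2 / m - 1` at the rational
multiple `2θ` of `π`, so by Niven's theorem `2 / m - 1 ∈ {-1, -1/2, 0, 1/2, 1}`; for a positive
integer `m` this leaves `m = 1, 2, 4`. -/

lemma eq_one_or_two_or_four_of_two_div_sub_one_mem {m : ℕ} (hm : 0 < m)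
    (h : (2 / m - 1 : ℝ) ∈ ({-1, -1 / 2, 0, 1 / 2, 1} : Set ℝ)) : m = 1 ∨ m = 2 ∨ m = 4 := by
  have hpos : (0 : ℝ) < 2 / m := by positivity
  have hle : m ≤ 4 := by
    have : (1 / 2 : ℝ) ≤ 2 / m := by
      simp only [Set.mem_insert_iff, Set.mem_singleton_iff] at h
      rcases h with h | h | h | h | h <;> linarith
    rw [le_div_iff₀ (by positivity)] at this
    exact_mod_cast (by linarith : (m : ℝ) ≤ 4)
  interval_cases m <;> first | omega | norm_num at h

lemma cos_two_mul_of_cos_eq_one_div_sqrt {θ : ℝ} {m : ℕ} (h : cos θ = 1 / √m) :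
    cos (2 * θ) = 2 / m - 1 := by
  rw [cos_two_mul, h, div_pow, one_pow, sq_sqrt m.cast_nonneg]
  ring

lemma eq_one_or_two_or_four_of_cos_rat_mul_pi_eq_one_div_sqrt {q : ℚ} {m : ℕ} (hm : 0 < m)
    (h : cos (q * π) = 1 / √m) : m = 1 ∨ m = 2 ∨ m = 4 := by
  have hcos := cos_two_mul_of_cos_eq_one_div_sqrt h
  refine eq_one_or_two_or_four_of_two_div_sub_one_mem hm (hcos ▸ niven ⟨2 * q, ?_⟩ ⟨2 / m - 1, ?_⟩)
  · push_cast; ring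
  · rw [hcos]; push_cast; rfl

theorem inv_sqrt_cos_rational_angle_general (m : ℕ) (hm : 0 < m) (x n : ℤ)
    (h : Real.cos (2 * π * x / n) = 1 / Real.sqrt m) :
    m = 1 ∨ m = 2 ∨ m = 4 := by
  refine eq_one_or_two_or_four_of_cos_rat_mul_pi_eq_one_div_sqrt (q := 2 * x / n) hm ?_
  rw [← h]
  push_cast
  ring_nf

/-- If `1/√m` (for a positive integer `m`) is the cosine of a rational multiple of `2π`, then
`m ∈ {1, 2, 4}`. -/
theorem inv_sqrt_cos_rational_angle (m : ℕ) (hm : 0 < m) (x n : ℤ) (hn : 1 ≤ n)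
    (h : Real.cos (2 * π * x / n) = 1 / Real.sqrt m) :
    m = 1 ∨ m = 2 ∨ m = 4 :=
  inv_sqrt_cos_rational_angle_general m hm x n h
end

section
/- For integers n ≥ 1, the equation cos(2πx/n) = (1+√5)/4 has an integer solution x if and only if 10 divides n; in that case the solutions are x ∈ (n/10 + nℤ) ∪ (9n/10 + nℤ). -/
/-! Since `cos (π / 5) = (1 + √5) / 4`, the equation reads `cos (2πx/n) = cos (2π/10)`, i.e.
`x/n ≡ ±1/10` modulo `1`, i.e. `10x ≡ ±n [ZMOD 10n]`. This forces `10 ∣ n`, and for `n = 10m`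
it says `x ≡ ±m [ZMOD n]`, where `-m ≡ 9m`. -/

open Real

theorem Real.cos_two_pi_mul_eq_cos_two_pi_mul_iff {s t : ℝ} :
    cos (2 * π * t) = cos (2 * π * s) ↔ ∃ k : ℤ, t = k + s ∨ t = k - s := by
  have h2π : 2 * π ≠ 0 := by positivity
  rw [eq_comm, cos_eq_cos_iff]
  refine exists_congr fun k => or_congr ?_ ?_
  · rw [show 2 * k * π + 2 * π * s = 2 * π * (k + s) by ring, mul_right_inj' h2π]
  · rw [show 2 * k * π - 2 * π * s = 2 * π * (k - s) by ring, mul_right_inj' h2π]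

theorem Real.cos_two_pi_mul_intCast_div_eq_cos_iff {x n a m : ℤ} (hn : n ≠ 0) (hm : m ≠ 0) :
    cos (2 * π * x / n) = cos (2 * π * a / m) ↔
      ∃ k : ℤ, x * m = k * n * m + a * n ∨ x * m = k * n * m - a * n := by
  have hn' : (n : ℝ) ≠ 0 := by exact_mod_cast hn
  have hm' : (m : ℝ) ≠ 0 := by exact_mod_cast hm
  rw [mul_div_assoc, mul_div_assoc, cos_two_pi_mul_eq_cos_two_pi_mul_iff]
  refine exists_congr fun k => or_congr ?_ ?_ <;>
    rw [← @Int.cast_inj ℝ] <;> push_cast <;> field_simp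

theorem Real.cos_two_pi_mul_intCast_div_eq_golden_iff {x n : ℤ} (hn : n ≠ 0) :
    cos (2 * π * x / n) = (1 + √5) / 4 ↔
      ∃ k : ℤ, x * 10 = k * n * 10 + n ∨ x * 10 = k * n * 10 - n := by
  have h : cos (2 * π * (1 : ℤ) / (10 : ℤ)) = (1 + √5) / 4 := by
    rw [← cos_pi_div_five]; push_cast; ring_nf
  rw [← h, cos_two_pi_mul_intCast_div_eq_cos_iff hn (by norm_num), one_mul]

theorem Int.dvd_of_mul_eq_mul_mul_add_or_sub {x n d k : ℤ}
    (h : x * d = k * n * d + n ∨ x * d = k * n * d - n) : d ∣ n := by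
  rcases h with h | h
  · exact ⟨x - k * n, by linear_combination -h⟩
  · exact ⟨k * n - x, by linear_combination h⟩

theorem Int.exists_mul_eq_mul_mul_add_or_sub_iff {x m d : ℤ} (hd : d ≠ 0) :
    (∃ k : ℤ, x * d = k * (d * m) * d + d * m ∨ x * d = k * (d * m) * d - d * m) ↔
      ∃ k : ℤ, x = m + d * m * k ∨ x = (d - 1) * m + d * m * k := by
  constructor
  · rintro ⟨k, h | h⟩
    · refine ⟨k, Or.inl (mul_right_cancel₀ hd ?_)⟩
      linear_combination h
    · refine ⟨k - 1, Or.inr (mul_right_cancel₀ hd ?_)⟩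
      linear_combination h
  · rintro ⟨k, h | h⟩
    · exact ⟨k, Or.inl (by linear_combination d * h)⟩
    · exact ⟨k + 1, Or.inr (by linear_combination d * h)⟩

/-- For `n ≥ 1`, `cos(2πx/n) = (1+√5)/4` has an integer solution `x` iff `10 ∣ n`, in which case
the solutions are exactly `x ∈ (n/10 + nℤ) ∪ (9n/10 + nℤ)`. -/
theorem cos_eq_golden_solutions (n : ℤ) (hn : 1 ≤ n) :
    ((∃ x : ℤ, Real.cos (2 * π * x / n) = (1 + Real.sqrt 5) / 4) ↔ 10 ∣ n) ∧
    (10 ∣ n → ∀ x : ℤ, Real.cos (2 * π * x / n) = (1 + Real.sqrt 5) / 4 ↔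
      ∃ k : ℤ, x = n / 10 + n * k ∨ x = 9 * n / 10 + n * k) := by
  simp only [cos_two_pi_mul_intCast_div_eq_golden_iff (by omega : n ≠ 0)]
  refine ⟨⟨fun ⟨_, _, h⟩ => Int.dvd_of_mul_eq_mul_mul_add_or_sub h, ?_⟩, ?_⟩
  · rintro ⟨m, rfl⟩
    exact ⟨m, 0, Or.inl (by ring)⟩
  · rintro ⟨m, rfl⟩ x
    rw [Int.exists_mul_eq_mul_mul_add_or_sub_iff (by norm_num), show 10 * m / 10 = m by omega,
      show 9 * (10 * m) / 10 = (10 - 1) * m by omega]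
end
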